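/- arXiv:1911.01596 — 4 statements merged into one kernel-verified Lean document; each statement's English description precedes it below -/
import Mathlib

section
/- Let X be an n × m real matrix of rank q, partitioned with invertible q × q block X11 and satisfying X22 = X21 X11⁻¹ X12. Then the Moore-Penrose inverse of X is given by X⁺ = [X11ᵀ; X12ᵀ] (X11 X11ᵀ + X12 X12ᵀ)⁻¹ X11 (X11ᵀ X11 + X21ᵀ X21)⁻¹ [X11ᵀ, X21ᵀ]. -/
open Matrix

lemma posDef_self_mul_transpose {k : Type*} [Fintype k] [DecidableEq k]
    (A : Matrix k k ℝ) (hA : IsUnit A.det) : (A * Aᵀ).PosDef := by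
  refine posDef_iff_dotProduct_mulVec.mpr ⟨?_, fun x hx => ?_⟩
  · simpa using isHermitian_mul_conjTranspose_self A
  · have hy : Aᵀ *ᵥ x ≠ 0 := by
      have hu : IsUnit Aᵀ := (Matrix.isUnit_iff_isUnit_det _).2 (by simpa using hA)
      exact (Matrix.mulVec_injective_iff_isUnit.mpr hu).ne_iff' (by simp) |>.2 hx
    have : star x ⬝ᵥ (A * Aᵀ) *ᵥ x = star (Aᵀ *ᵥ x) ⬝ᵥ (Aᵀ *ᵥ x) := by
      rw [← mulVec_mulVec, dotProduct_mulVec, ← mulVec_transpose]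
      simp
    rw [this]
    exact dotProduct_star_self_pos_iff.mpr hy

theorem moorePenrose_block_formula (n m q : ℕ)
    (X11 : Matrix (Fin q) (Fin q) ℝ) (X12 : Matrix (Fin q) (Fin (m - q)) ℝ)
    (X21 : Matrix (Fin (n - q)) (Fin q) ℝ) (X22 : Matrix (Fin (n - q)) (Fin (m - q)) ℝ)
    (hX11 : IsUnit X11.det)
    (h22 : X22 = X21 * X11⁻¹ * X12)
    (Xp : Matrix (Fin q ⊕ Fin (m - q)) (Fin q ⊕ Fin (n - q)) ℝ)
    (h1 : Matrix.fromBlocks X11 X12 X21 X22 * Xp * Matrix.fromBlocks X11 X12 X21 X22 =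
      Matrix.fromBlocks X11 X12 X21 X22)
    (h2 : Xp * Matrix.fromBlocks X11 X12 X21 X22 * Xp = Xp)
    (h3 : (Matrix.fromBlocks X11 X12 X21 X22 * Xp)ᵀ = Matrix.fromBlocks X11 X12 X21 X22 * Xp)
    (h4 : (Xp * Matrix.fromBlocks X11 X12 X21 X22)ᵀ = Xp * Matrix.fromBlocks X11 X12 X21 X22) :
    Xp = Matrix.fromRows X11ᵀ X12ᵀ * (X11 * X11ᵀ + X12 * X12ᵀ)⁻¹ * X11 *
      (X11ᵀ * X11 + X21ᵀ * X21)⁻¹ * Matrix.fromCols X11ᵀ X21ᵀ := by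
  have hXdef : Matrix.fromBlocks X11 X12 X21 X22 = Matrix.fromBlocks X11 X12 X21 X22 := rfl
  set X : Matrix (Fin q ⊕ Fin (n - q)) (Fin q ⊕ Fin (m - q)) ℝ :=
    Matrix.fromBlocks X11 X12 X21 X22 with hX
  set C : Matrix (Fin q ⊕ Fin (n - q)) (Fin q) ℝ := Matrix.fromRows X11 X21 with hCdef
  set R : Matrix (Fin q) (Fin q ⊕ Fin (m - q)) ℝ := Matrix.fromCols X11 X12 with hRdef
  set G : Matrix (Fin q ⊕ Fin (m - q)) (Fin q ⊕ Fin (n - q)) ℝ :=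
    Matrix.fromRows X11ᵀ X12ᵀ * (X11 * X11ᵀ + X12 * X12ᵀ)⁻¹ * X11 *
      (X11ᵀ * X11 + X21ᵀ * X21)⁻¹ * Matrix.fromCols X11ᵀ X21ᵀ with hGdef
  have hRT : Rᵀ = Matrix.fromRows X11ᵀ X12ᵀ := transpose_fromCols X11 X12
  have hCT : Cᵀ = Matrix.fromCols X11ᵀ X21ᵀ := transpose_fromRows X11 X21
  have hRR : R * Rᵀ = X11 * X11ᵀ + X12 * X12ᵀ := by
    rw [hRT]; exact fromCols_mul_fromRows X11 X12 X11ᵀ X12ᵀ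
  have hCC : Cᵀ * C = X11ᵀ * X11 + X21ᵀ * X21 := by
    rw [hCT]; exact fromCols_mul_fromRows X11ᵀ X21ᵀ X11 X21
  have hCCsymm : (Cᵀ * C)ᵀ = Cᵀ * C := by rw [transpose_mul, transpose_transpose]
  have hRRsymm : (R * Rᵀ)ᵀ = R * Rᵀ := by rw [transpose_mul, transpose_transpose]
  have hG2 : G = Rᵀ * (R * Rᵀ)⁻¹ * X11 * (Cᵀ * C)⁻¹ * Cᵀ := by
    rw [hGdef, hRR, hCC, hRT, hCT]
  -- invertibility facts
  have hRRu : IsUnit (R * Rᵀ).det := by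
    rw [hRR]
    exact ((posDef_self_mul_transpose X11 hX11).add_posSemidef
      (by simpa using posSemidef_self_mul_conjTranspose X12)).det_pos.ne'.isUnit
  have hCCu : IsUnit (Cᵀ * C).det := by
    rw [hCC]
    have hp : (X11ᵀ * X11ᵀᵀ).PosDef :=
      posDef_self_mul_transpose X11ᵀ (by simpa using hX11)
    rw [transpose_transpose] at hp
    exact (hp.add_posSemidef (by simpa using posSemidef_self_mul_conjTranspose X21ᵀ
      )).det_pos.ne'.isUnit
  have eR : R * Rᵀ * (R * Rᵀ)⁻¹ = 1 := Matrix.mul_nonsing_inv _ hRRu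
  have eR' : (R * Rᵀ)⁻¹ * (R * Rᵀ) = 1 := Matrix.nonsing_inv_mul _ hRRu
  have eC : (Cᵀ * C)⁻¹ * (Cᵀ * C) = 1 := Matrix.nonsing_inv_mul _ hCCu
  have e11 : X11⁻¹ * X11 = 1 := Matrix.nonsing_inv_mul _ hX11
  have e11' : X11 * X11⁻¹ = 1 := Matrix.mul_nonsing_inv _ hX11
  -- rank factorization
  have hfact : X = C * X11⁻¹ * R := by
    rw [hX, hCdef, hRdef, fromRows_mul, e11', fromRows_mul_fromCols, Matrix.one_mul,
      Matrix.one_mul, h22]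
    rw [Matrix.mul_assoc X21 X11⁻¹ X11, e11, Matrix.mul_one]
  -- cancellation helpers
  have cR : ∀ {k : Type} (Y : Matrix (Fin q) k ℝ), R * (Rᵀ * ((R * Rᵀ)⁻¹ * Y)) = Y := by
    intro k Y
    rw [← Matrix.mul_assoc R Rᵀ, ← Matrix.mul_assoc (R * Rᵀ), eR, Matrix.one_mul]
  have cR' : ∀ {k : Type} (Y : Matrix (Fin q) k ℝ),
      (R * Rᵀ)⁻¹ * (R * (Rᵀ * Y)) = Y := by
    intro k Y
    rw [← Matrix.mul_assoc R Rᵀ, ← Matrix.mul_assoc ((R * Rᵀ)⁻¹), eR', Matrix.one_mul]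
  have cC : ∀ {k : Type} (Y : Matrix (Fin q) k ℝ),
      (Cᵀ * C)⁻¹ * (Cᵀ * (C * Y)) = Y := by
    intro k Y
    rw [← Matrix.mul_assoc Cᵀ C, ← Matrix.mul_assoc ((Cᵀ * C)⁻¹), eC, Matrix.one_mul]
  have c11 : ∀ {k : Type} (Y : Matrix (Fin q) k ℝ), X11⁻¹ * (X11 * Y) = Y := by
    intro k Y; rw [← Matrix.mul_assoc, e11, Matrix.one_mul]
  have c11' : ∀ {k : Type} (Y : Matrix (Fin q) k ℝ), X11 * (X11⁻¹ * Y) = Y := by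
    intro k Y; rw [← Matrix.mul_assoc, e11', Matrix.one_mul]
  -- X * G and G * X
  have hXG : X * G = C * ((Cᵀ * C)⁻¹ * Cᵀ) := by
    rw [hfact, hG2]
    simp only [Matrix.mul_assoc]
    rw [cR, c11]
  have hGX : G * X = Rᵀ * ((R * Rᵀ)⁻¹ * R) := by
    rw [hfact, hG2]
    simp only [Matrix.mul_assoc]
    rw [cC, c11']
  -- candidate satisfies the Penrose conditions
  have g1 : X * G * X = X := by
    rw [hXG]
    conv_lhs => rw [hfact]
    conv_rhs => rw [hfact]
    simp only [Matrix.mul_assoc]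
    rw [cC]
  have g2 : G * X * G = G := by
    rw [hGX]
    conv_lhs => rw [hG2]
    conv_rhs => rw [hG2]
    simp only [Matrix.mul_assoc]
    rw [cR']
  have g3 : (X * G)ᵀ = X * G := by
    rw [hXG]
    simp only [transpose_mul, transpose_transpose, transpose_nonsing_inv, hCCsymm,
      Matrix.mul_assoc]
  have g4 : (G * X)ᵀ = G * X := by
    rw [hGX]
    simp only [transpose_mul, transpose_transpose, transpose_nonsing_inv, hRRsymm,
      Matrix.mul_assoc]
  -- uniqueness of the Moore-Penrose inverse
  have hXpX : Xp * X = G * X := by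
    have step : Xp * X = (Xp * X) * (G * X) := by
      conv_lhs => rw [← g1]
      simp only [Matrix.mul_assoc]
    calc Xp * X = (Xp * X)ᵀ := h4.symm
      _ = ((Xp * X) * (G * X))ᵀ := by rw [← step]
      _ = (G * X)ᵀ * (Xp * X)ᵀ := transpose_mul _ _
      _ = (G * X) * (Xp * X) := by rw [g4, h4]
      _ = G * (X * Xp * X) := by simp only [Matrix.mul_assoc]
      _ = G * X := by rw [h1]
  have hXXp : X * Xp = X * G := by
    have step : X * Xp = (X * G) * (X * Xp) := by
      conv_lhs => rw [← g1]
      simp only [Matrix.mul_assoc]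
    calc X * Xp = (X * Xp)ᵀ := h3.symm
      _ = ((X * G) * (X * Xp))ᵀ := by rw [← step]
      _ = (X * Xp)ᵀ * (X * G)ᵀ := transpose_mul _ _
      _ = (X * Xp) * (X * G) := by rw [g3, h3]
      _ = (X * Xp * X) * G := by simp only [Matrix.mul_assoc]
      _ = X * G := by rw [h1]
  calc Xp = Xp * X * Xp := h2.symm
    _ = G * X * Xp := by rw [hXpX]
    _ = G * (X * Xp) := by rw [Matrix.mul_assoc G X Xp]
    _ = G * (X * G) := by rw [hXXp]
    _ = G * X * G := by rw [Matrix.mul_assoc G X G]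
    _ = G := g2
end

section
/- Let X(t) be a differentiable curve of n × m real matrices of constant rank with differentiable Moore-Penrose inverse Y(t) = X(t)⁺. Then the derivative of Y satisfies Y' = −X⁺ X' X⁺ + X⁺ X⁺ᵀ (X')ᵀ (I_n − X X⁺) + (I_m − X⁺ X)(X')ᵀ X⁺ᵀ X⁺. -/
/-!
Write `A = X t`, `B = Y t`, `A' = X'`, `B' = Y'`, and let `P = A B` and `Q = B A`, the orthogonal
projections onto the column spaces of `A` and `Aᵀ`. Split `B' = Q B' P + Q B' (1 - P) + (1 - Q) B'`.
Differentiating `B A B = B` gives `B' A B + B A' B + B A B' = B'`, which sandwiched between `Q` and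
`P` yields `Q B' P = -B A' B`. Multiplied on the right by `1 - P` it gives
`B' (1 - P) = B (A' B + A B') (1 - P)`; since `A' B + A B'`, the derivative of `P`, is symmetric
and `(1 - P) A = 0`, this equals `B Bᵀ A'ᵀ (1 - P)`. The Penrose equations are invariant under
`(A, B) ↦ (Aᵀ, Bᵀ)`, which turns the last identity into `(1 - Q) B' = (1 - Q) A'ᵀ Bᵀ B`.
-/

open Matrix

section EntrywiseDeriv

variable {𝕜 : Type*} [NontriviallyNormedField 𝕜] {l m n : Type*}

/-- Matrices carry no preferred norm, so derivatives of matrix-valued curves are taken entrywise. -/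
def HasEntrywiseDerivAt (F : 𝕜 → Matrix m n 𝕜) (F' : Matrix m n 𝕜) (t : 𝕜) : Prop :=
  ∀ i j, HasDerivAt (fun s => F s i j) (F' i j) t

variable {F : 𝕜 → Matrix m n 𝕜} {F' F'' : Matrix m n 𝕜} {t : 𝕜}

theorem HasEntrywiseDerivAt.unique (hF : HasEntrywiseDerivAt F F' t)
    (hF' : HasEntrywiseDerivAt F F'' t) : F' = F'' :=
  Matrix.ext fun i j => (hF i j).unique (hF' i j)

theorem HasEntrywiseDerivAt.transpose (hF : HasEntrywiseDerivAt F F' t) :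
    HasEntrywiseDerivAt (fun s => (F s)ᵀ) F'ᵀ t :=
  fun i j => hF j i

theorem HasEntrywiseDerivAt.mul [Fintype n] {G : 𝕜 → Matrix n l 𝕜} {G' : Matrix n l 𝕜}
    (hF : HasEntrywiseDerivAt F F' t) (hG : HasEntrywiseDerivAt G G' t) :
    HasEntrywiseDerivAt (fun s => F s * G s) (F' * G t + F t * G') t := by
  intro i j
  simpa only [mul_apply, Matrix.add_apply, Finset.sum_add_distrib] using
    HasDerivAt.fun_sum fun k _ => (hF i k).fun_mul (hG k j)

theorem HasEntrywiseDerivAt.isSymm {F : 𝕜 → Matrix n n 𝕜} {F' : Matrix n n 𝕜}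
    (hF : HasEntrywiseDerivAt F F' t) (hsymm : ∀ s, (F s).IsSymm) : F'.IsSymm :=
  HasEntrywiseDerivAt.unique (by simpa only [fun s => (hsymm s).eq] using hF.transpose) hF

end EntrywiseDeriv

namespace Matrix

variable {R : Type*} [CommRing R] {m n : Type*} [Fintype m] [Fintype n]

structure IsMoorePenroseInverse (A : Matrix n m R) (B : Matrix m n R) : Prop where
  mul_mul_self : A * B * A = A
  mul_mul_self' : B * A * B = B
  isSymm_mul : (A * B).IsSymm
  isSymm_mul' : (B * A).IsSymm

variable {A A' : Matrix n m R} {B B' : Matrix m n R}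

theorem IsMoorePenroseInverse.transpose (h : IsMoorePenroseInverse A B) :
    IsMoorePenroseInverse Aᵀ Bᵀ where
  mul_mul_self := by rw [← transpose_mul, ← transpose_mul, ← Matrix.mul_assoc, h.mul_mul_self]
  mul_mul_self' := by rw [← transpose_mul, ← transpose_mul, ← Matrix.mul_assoc, h.mul_mul_self']
  isSymm_mul := by rw [← transpose_mul]; exact h.isSymm_mul'.transpose
  isSymm_mul' := by rw [← transpose_mul]; exact h.isSymm_mul.transpose

theorem IsMoorePenroseInverse.one_sub_mul_mul_eq_zero [DecidableEq n]
    (h : IsMoorePenroseInverse A B) :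
    (1 - A * B) * A = 0 := by
  rw [Matrix.sub_mul, Matrix.one_mul, h.mul_mul_self, sub_self]

theorem IsMoorePenroseInverse.isIdempotentElem_one_sub_mul [DecidableEq n]
    (h : IsMoorePenroseInverse A B) :
    IsIdempotentElem (1 - A * B) :=
  IsIdempotentElem.one_sub <| by
    rw [IsIdempotentElem, ← Matrix.mul_assoc, h.mul_mul_self]

/- In the lemmas below `B'` is a tangent vector at `B` (a derivative), and `hd`, `hd'` are the
linearizations at `(A, B)` along `(A', B')` of `B A B = B` and of the symmetry of `A B` or `B A`. -/

theorem IsMoorePenroseInverse.tangent_mul_one_sub_mul_eq [DecidableEq n]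
    (h : IsMoorePenroseInverse A B)
    (hd : B' * A * B + B * A' * B + B * A * B' = B') (hd' : (A' * B + A * B').IsSymm) :
    B' * (1 - A * B) = B * Bᵀ * A'ᵀ * (1 - A * B) := by
  have h₁ : B' * (1 - A * B) = B * (A' * B + A * B') := by
    rw [Matrix.mul_sub, Matrix.mul_one, Matrix.mul_add]
    simp only [Matrix.mul_assoc] at hd ⊢
    linear_combination (norm := abel1) -hd
  have h₂ : (1 - A * B) * (A' * B + A * B') = (1 - A * B) * A' * B := by
    rw [Matrix.mul_add, ← Matrix.mul_assoc _ A, h.one_sub_mul_mul_eq_zero, Matrix.zero_mul,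
      add_zero, Matrix.mul_assoc]
  have h₃ : (A' * B + A * B') * (1 - A * B) = Bᵀ * A'ᵀ * (1 - A * B) := by
    simpa only [transpose_mul, transpose_sub, transpose_one, h.isSymm_mul.eq, hd'.eq,
      Matrix.mul_assoc] using congrArg Matrix.transpose h₂
  calc B' * (1 - A * B) = B' * (1 - A * B) * (1 - A * B) := by
        rw [Matrix.mul_assoc, h.isIdempotentElem_one_sub_mul.eq]
    _ = B * Bᵀ * A'ᵀ * (1 - A * B) := by
        rw [h₁, Matrix.mul_assoc, h₃, ← Matrix.mul_assoc, ← Matrix.mul_assoc]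

theorem IsMoorePenroseInverse.one_sub_mul_tangent_eq [DecidableEq m]
    (h : IsMoorePenroseInverse A B)
    (hd : B' * A * B + B * A' * B + B * A * B' = B') (hd' : (B' * A + B * A').IsSymm) :
    (1 - B * A) * B' = (1 - B * A) * A'ᵀ * Bᵀ * B := by
  have hdT : B'ᵀ * Aᵀ * Bᵀ + Bᵀ * A'ᵀ * Bᵀ + Bᵀ * Aᵀ * B'ᵀ = B'ᵀ := by
    simpa only [transpose_add, transpose_mul, Matrix.mul_assoc, add_comm, add_left_comm] using
      congrArg Matrix.transpose hd
  have hd'T : (A'ᵀ * Bᵀ + Aᵀ * B'ᵀ).IsSymm := by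
    simpa only [transpose_add, transpose_mul, add_comm] using hd'.transpose
  simpa only [transpose_mul, transpose_sub, transpose_one, transpose_transpose,
    h.isSymm_mul'.eq, Matrix.mul_assoc] using
    congrArg Matrix.transpose (h.transpose.tangent_mul_one_sub_mul_eq hdT hd'T)

theorem IsMoorePenroseInverse.mul_mul_tangent_mul_mul_eq (h : IsMoorePenroseInverse A B)
    (hd : B' * A * B + B * A' * B + B * A * B' = B') :
    B * A * B' * (A * B) = -(B * A' * B) := by
  have hB (Z : Matrix n n R) : B * (A * (B * Z)) = B * Z := by
    rw [← Matrix.mul_assoc, ← Matrix.mul_assoc, h.mul_mul_self']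
  have hB' : B * (A * B) = B := by rw [← Matrix.mul_assoc, h.mul_mul_self']
  have := congrArg (fun M => B * A * M * (A * B)) hd
  simp only [Matrix.add_mul, Matrix.mul_add, Matrix.mul_assoc, hB, hB'] at this ⊢
  linear_combination (norm := abel1) this

theorem IsMoorePenroseInverse.tangent_eq [DecidableEq m] [DecidableEq n]
    (h : IsMoorePenroseInverse A B)
    (hd : B' * A * B + B * A' * B + B * A * B' = B') (hdAB : (A' * B + A * B').IsSymm)
    (hdBA : (B' * A + B * A').IsSymm) :
    B' = -(B * A' * B) + B * Bᵀ * A'ᵀ * (1 - A * B) + (1 - B * A) * A'ᵀ * Bᵀ * B := by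
  calc B' = B * A * B' * (A * B) + B * A * (B' * (1 - A * B)) + (1 - B * A) * B' := by
        simp only [Matrix.mul_sub, Matrix.sub_mul, Matrix.mul_one, Matrix.one_mul, Matrix.mul_assoc]
        abel
    _ = -(B * A' * B) + B * A * (B * Bᵀ * A'ᵀ * (1 - A * B)) + (1 - B * A) * A'ᵀ * Bᵀ * B := by
        rw [h.mul_mul_tangent_mul_mul_eq hd, h.tangent_mul_one_sub_mul_eq hd hdAB,
          h.one_sub_mul_tangent_eq hd hdBA]
    _ = -(B * A' * B) + B * Bᵀ * A'ᵀ * (1 - A * B) + (1 - B * A) * A'ᵀ * Bᵀ * B := by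
        simp only [← Matrix.mul_assoc, h.mul_mul_self']

end Matrix

theorem deriv_moorePenrose (n m : ℕ)
    (X : ℝ → Matrix (Fin n) (Fin m) ℝ) (Y : ℝ → Matrix (Fin m) (Fin n) ℝ) (t : ℝ)
    (X' : Matrix (Fin n) (Fin m) ℝ) (Y' : Matrix (Fin m) (Fin n) ℝ)
    (hX : ∀ i j, HasDerivAt (fun s => X s i j) (X' i j) t)
    (hY : ∀ i j, HasDerivAt (fun s => Y s i j) (Y' i j) t)
    (h1 : ∀ s, X s * Y s * X s = X s) (h2 : ∀ s, Y s * X s * Y s = Y s)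
    (h3 : ∀ s, (X s * Y s)ᵀ = X s * Y s) (h4 : ∀ s, (Y s * X s)ᵀ = Y s * X s) :
    Y' = -(Y t * X' * Y t) + Y t * (Y t)ᵀ * X'ᵀ * (1 - X t * Y t)
      + (1 - Y t * X t) * X'ᵀ * (Y t)ᵀ * Y t := by
  have hd : Y' * X t * Y t + Y t * X' * Y t + Y t * X t * Y' = Y' := by
    have hYXY := HasEntrywiseDerivAt.mul (HasEntrywiseDerivAt.mul hY hX) hY
    simp only [h2, Matrix.add_mul] at hYXY
    exact hYXY.unique hY
  exact IsMoorePenroseInverse.tangent_eq ⟨h1 t, h2 t, h3 t, h4 t⟩ hd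
    ((HasEntrywiseDerivAt.mul hX hY).isSymm h3) ((HasEntrywiseDerivAt.mul hY hX).isSymm h4)
end

section
/- Let X be a differentiable curve of n × m real matrices with full column rank m, and let Y(t) = (X(t)ᵀX(t))⁻¹X(t)ᵀ be its Moore-Penrose inverse. Then Y' = −Y X' Y + Y Yᵀ (X')ᵀ (I_n − X Y). -/
open Matrix

private lemma entry_mul_hasDerivAt {p q r : ℕ}
    {A : ℝ → Matrix (Fin p) (Fin q) ℝ} {B : ℝ → Matrix (Fin q) (Fin r) ℝ}
    {A' : Matrix (Fin p) (Fin q) ℝ} {B' : Matrix (Fin q) (Fin r) ℝ} {t : ℝ}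
    (hA : ∀ i j, HasDerivAt (fun s => A s i j) (A' i j) t)
    (hB : ∀ i j, HasDerivAt (fun s => B s i j) (B' i j) t) :
    ∀ i j, HasDerivAt (fun s => (A s * B s) i j) ((A' * B t + A t * B') i j) t := by
  intro i j
  have h : HasDerivAt (fun s => ∑ k, A s i k * B s k j)
      (∑ k, (A' i k * B t k j + A t i k * B' k j)) t :=
    HasDerivAt.fun_sum fun k _ => (hA i k).mul (hB k j)
  have he : (A' * B t + A t * B') i j = ∑ k, (A' i k * B t k j + A t i k * B' k j) := by
    simp [Matrix.mul_apply, Matrix.add_apply, Finset.sum_add_distrib]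
  have hfun : (fun s => (A s * B s) i j) = fun s => ∑ k, A s i k * B s k j := by
    funext s; simp [Matrix.mul_apply]
  rw [he, hfun]
  exact h

private lemma det_differentiableAt {p : ℕ} {A : ℝ → Matrix (Fin p) (Fin p) ℝ} {t : ℝ}
    (hA : ∀ i j, DifferentiableAt ℝ (fun s => A s i j) t) :
    DifferentiableAt ℝ (fun s => (A s).det) t := by
  simp only [Matrix.det_apply']
  exact DifferentiableAt.fun_sum fun σ _ => DifferentiableAt.const_mul
    (DifferentiableAt.fun_finsetProd fun k _ => hA (σ k) k) _

private lemma inv_entry_differentiableAt {p : ℕ} {A : ℝ → Matrix (Fin p) (Fin p) ℝ} {t : ℝ}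
    (hA : ∀ i j, DifferentiableAt ℝ (fun s => A s i j) t)
    (hdet : (A t).det ≠ 0) :
    ∀ i j, DifferentiableAt ℝ (fun s => (A s)⁻¹ i j) t := by
  intro i j
  have he : (fun s => (A s)⁻¹ i j) =
      fun s => ((A s).det)⁻¹ * ((A s).updateRow j (Pi.single i 1)).det := by
    funext s
    rw [Matrix.inv_def, Matrix.smul_apply, Matrix.adjugate_apply, Ring.inverse_eq_inv,
      smul_eq_mul]
  rw [he]
  have hadj : DifferentiableAt ℝ (fun s => ((A s).updateRow j (Pi.single i 1)).det) t := by
    apply det_differentiableAt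
    intro i' j'
    by_cases h : i' = j
    · simp only [h, Matrix.updateRow_self]
      exact differentiableAt_const _
    · simp only [Matrix.updateRow_ne h]
      exact hA i' j'
  exact (((det_differentiableAt hA).inv hdet).mul hadj)

theorem deriv_moorePenrose_full_column_rank (n m : ℕ)
    (X : ℝ → Matrix (Fin n) (Fin m) ℝ) (Y : ℝ → Matrix (Fin m) (Fin n) ℝ) (t : ℝ)
    (X' : Matrix (Fin n) (Fin m) ℝ)
    (hX : ∀ i j, HasDerivAt (fun s => X s i j) (X' i j) t)
    (hrank : ∀ s, (X s).rank = m)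
    (hY : ∀ s, Y s = ((X s)ᵀ * X s)⁻¹ * (X s)ᵀ) :
    ∃ Y' : Matrix (Fin m) (Fin n) ℝ,
      (∀ i j, HasDerivAt (fun s => Y s i j) (Y' i j) t) ∧
      Y' = -(Y t * X' * Y t) + Y t * (Y t)ᵀ * X'ᵀ * (1 - X t * Y t) := by
  set G : ℝ → Matrix (Fin m) (Fin m) ℝ := fun s => (X s)ᵀ * X s with hGdef
  -- invertibility
  have hGunit : ∀ s, IsUnit (G s).det := by
    intro s
    have hr : (G s).rank = m := by
      rw [hGdef]; rw [Matrix.rank_transpose_mul_self]; exact hrank s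
    have htop : LinearMap.range (G s).mulVecLin = ⊤ := by
      apply Submodule.eq_top_of_finrank_eq
      rw [Module.finrank_fin_fun]
      exact hr
    have hsurj : Function.Surjective (G s).mulVec := by
      intro v
      obtain ⟨w, hw⟩ := LinearMap.range_eq_top.mp htop v
      exact ⟨w, hw⟩
    exact (Matrix.isUnit_iff_isUnit_det _).mp (Matrix.mulVec_surjective_iff_isUnit.mp hsurj)
  -- derivative of G
  have hXT : ∀ i j, HasDerivAt (fun s => (X s)ᵀ i j) (X'ᵀ i j) t := fun i j => hX j i
  have hG : ∀ i j, HasDerivAt (fun s => G s i j) ((X'ᵀ * X t + (X t)ᵀ * X') i j) t :=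
    entry_mul_hasDerivAt hXT hX
  -- derivative of G⁻¹
  have hGd : ∀ i j, DifferentiableAt ℝ (fun s => G s i j) t := fun i j => (hG i j).differentiableAt
  have hHd : ∀ i j, DifferentiableAt ℝ (fun s => (G s)⁻¹ i j) t :=
    inv_entry_differentiableAt hGd (hGunit t).ne_zero
  set H' : Matrix (Fin m) (Fin m) ℝ := Matrix.of fun i j => deriv (fun s => (G s)⁻¹ i j) t with hH'def
  have hH : ∀ i j, HasDerivAt (fun s => (G s)⁻¹ i j) (H' i j) t := fun i j =>
    (hHd i j).hasDerivAt
  -- implicit differentiation: H' * G t + (G t)⁻¹ * G' = 0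
  have hprod := entry_mul_hasDerivAt hH hG
  have hconst : ∀ i j, HasDerivAt (fun s => ((G s)⁻¹ * G s) i j) 0 t := by
    intro i j
    have : (fun s => ((G s)⁻¹ * G s) i j) = fun _ => (1 : Matrix (Fin m) (Fin m) ℝ) i j := by
      funext s; rw [Matrix.nonsing_inv_mul _ (hGunit s)]
    rw [this]; exact hasDerivAt_const _ _
  have hzero : H' * G t + (G t)⁻¹ * (X'ᵀ * X t + (X t)ᵀ * X') = 0 := by
    ext i j
    have := (hprod i j).unique (hconst i j)
    simpa using this
  have hH'eq : H' = -((G t)⁻¹ * (X'ᵀ * X t + (X t)ᵀ * X') * (G t)⁻¹) := by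
    have h1 : H' * G t = -((G t)⁻¹ * (X'ᵀ * X t + (X t)ᵀ * X')) :=
      add_eq_zero_iff_eq_neg.mp hzero
    calc H' = H' * G t * (G t)⁻¹ := by
            rw [mul_assoc, Matrix.mul_nonsing_inv _ (hGunit t), mul_one]
      _ = -((G t)⁻¹ * (X'ᵀ * X t + (X t)ᵀ * X') * (G t)⁻¹) := by rw [h1, neg_mul]
  -- derivative of Y
  have hYd : ∀ i j, HasDerivAt (fun s => Y s i j)
      ((H' * (X t)ᵀ + (G t)⁻¹ * X'ᵀ) i j) t := by
    intro i j
    have h := entry_mul_hasDerivAt hH hXT i j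
    have he : (fun s => Y s i j) = fun s => ((G s)⁻¹ * (X s)ᵀ) i j := by
      funext s; rw [hY s]
    rw [he]; exact h
  refine ⟨H' * (X t)ᵀ + (G t)⁻¹ * X'ᵀ, hYd, ?_⟩
  -- algebraic identity
  have hYt : Y t = (G t)⁻¹ * (X t)ᵀ := hY t
  have hHsymm : ((G t)⁻¹)ᵀ = (G t)⁻¹ := by
    rw [Matrix.transpose_nonsing_inv]
    congr 1
    rw [hGdef]
    rw [Matrix.transpose_mul, Matrix.transpose_transpose]
  have hYY : Y t * (Y t)ᵀ = (G t)⁻¹ := by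
    rw [hYt, Matrix.transpose_mul, Matrix.transpose_transpose, hHsymm]
    calc (G t)⁻¹ * (X t)ᵀ * (X t * (G t)⁻¹)
        = (G t)⁻¹ * ((X t)ᵀ * X t) * (G t)⁻¹ := by
          simp only [Matrix.mul_assoc]
      _ = (G t)⁻¹ * G t * (G t)⁻¹ := by rw [hGdef]
      _ = (G t)⁻¹ := by rw [Matrix.nonsing_inv_mul _ (hGunit t), one_mul]
  rw [hYY, hH'eq, hYt]
  simp only [Matrix.add_mul, Matrix.mul_add, Matrix.sub_mul, Matrix.mul_sub, Matrix.mul_one,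
    Matrix.one_mul, Matrix.neg_mul, Matrix.mul_neg, Matrix.mul_assoc]
  abel
end

section
/- Let X be an n × m real matrix with full column rank m and Moore-Penrose inverse X⁺ = (XᵀX)⁻¹Xᵀ. Then the determinant of the nm × nm matrix −X⁺ᵀ ⊗ X⁺ + [(I_n − X X⁺) ⊗ (X⁺ X⁺ᵀ)] K, where K is the commutation matrix satisfying K·vec(A) = vec(Aᵀ), has absolute value det(XᵀX)⁻ⁿ. -/
open Matrix Kronecker

/-! With `P = 1 - X X⁺` and the commutation matrix turned into a column swap by the reindexing,
the Jacobian factors as `(X⁺ X⁺ᵀ ⊗ 1) * (1 ⊗ P - swap (Xᵀ ⊗ X⁺ᵀ))`, because `X⁺ X⁺ᵀ Xᵀ = X⁺`.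
The second factor squares to the identity because `X⁺ X = 1` and `X X⁺` is symmetric,
so its determinant is `±1`. What remains is `|det (X⁺ X⁺ᵀ)| ^ n = det (Xᵀ X)⁻ⁿ`. -/

namespace Matrix

variable {R ι κ : Type*}

theorem mul_submatrix_id [Fintype ι] [Mul R] [AddCommMonoid R] {l m n : Type*}
    (M : Matrix l ι R) (N : Matrix ι m R) (e : n → m) :
    M * N.submatrix id e = (M * N).submatrix id e := by
  rw [submatrix_mul M N id id e Function.bijective_id, submatrix_id_id]

theorem submatrix_swap_kronecker_mul_kronecker [CommSemiring R] [Fintype ι] [Fintype κ]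
    {l m n o : Type*} (A : Matrix l κ R) (B : Matrix m ι R) (C : Matrix ι n R) (D : Matrix κ o R) :
    (A ⊗ₖ B).submatrix id Prod.swap * (C ⊗ₖ D) = ((A * D) ⊗ₖ (B * C)).submatrix id Prod.swap := by
  ext ⟨a, b⟩ ⟨c, d⟩
  simp only [mul_apply, submatrix_apply, kroneckerMap_apply, id, Prod.fst_swap, Prod.snd_swap,
    Fintype.sum_prod_type, Finset.sum_mul_sum]
  rw [Finset.sum_comm]
  refine Finset.sum_congr rfl fun _ _ => Finset.sum_congr rfl fun _ _ => by ring

theorem abs_det_eq_one_of_mul_self_eq_one [Fintype ι] [DecidableEq ι] [CommRing R] [LinearOrder R]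
    [IsStrictOrderedRing R] {M : Matrix ι ι R} (h : M * M = 1) : |M.det| = 1 := by
  have hdet : M.det * M.det = 1 := by rw [← det_mul, h, det_one]
  rcases mul_self_eq_one_iff.mp hdet with h1 | h1 <;> simp [h1]

theorem isUnit_of_rank_eq_card [Field R] [Fintype ι] [DecidableEq ι] {A : Matrix ι ι R}
    (h : A.rank = Fintype.card ι) : IsUnit A := by
  rw [← mulVec_surjective_iff_isUnit, ← coe_mulVecLin, ← LinearMap.range_eq_top]
  apply Submodule.eq_top_of_finrank_eq
  rw [← rank, h, Module.finrank_fintype_fun_eq_card]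

section Commutation

variable [CommSemiring R] [Fintype ι] [Fintype κ] [DecidableEq ι] [DecidableEq κ]
  {K : Matrix (κ × ι) (ι × κ) R}

theorem submatrix_swap_eq_one_of_mulVec_eq_transpose
    (hK : ∀ A : Matrix ι κ R, K *ᵥ (fun p => A p.1 p.2) = fun p => Aᵀ p.1 p.2) :
    K.submatrix id Prod.swap = 1 := by
  ext p ⟨k, i⟩
  have h := congrFun (hK (single i k 1)) p
  have hsingle : (fun p : ι × κ => single i k (1 : R) p.1 p.2) = Pi.single (i, k) 1 := by
    ext ⟨i', k'⟩
    simp [single_apply, Pi.single_apply, Prod.ext_iff, eq_comm]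
  rw [hsingle, mulVec_single_one] at h
  simpa [Prod.ext_iff, one_apply, single_apply, and_comm, eq_comm] using h

theorem reindex_prodComm_mul_eq_self
    (hK : ∀ A : Matrix ι κ R, K *ᵥ (fun p => A p.1 p.2) = fun p => Aᵀ p.1 p.2)
    (M : Matrix (κ × ι) (κ × ι) R) :
    reindex (Equiv.refl _) (Equiv.prodComm ι κ) (M * K) = M := by
  rw [reindex_apply, Equiv.refl_symm, Equiv.coe_refl, Equiv.prodComm_symm, Equiv.coe_prodComm,
    ← mul_submatrix_id, submatrix_swap_eq_one_of_mulVec_eq_transpose hK, Matrix.mul_one]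

end Commutation

section SwapReflection

variable [CommRing R] [Fintype ι] [Fintype κ] [DecidableEq ι] [DecidableEq κ]

def swapReflection (X : Matrix ι κ R) (Y : Matrix κ ι R) : Matrix (κ × ι) (κ × ι) R :=
  1 ⊗ₖ (1 - X * Y) - (Xᵀ ⊗ₖ Yᵀ).submatrix id Prod.swap

theorem kronecker_one_mul_swapReflection (X : Matrix ι κ R) (Y : Matrix κ ι R)
    (Z : Matrix κ κ R) :
    (Z ⊗ₖ 1) * swapReflection X Y =
      Z ⊗ₖ (1 - X * Y) - ((Z * Xᵀ) ⊗ₖ Yᵀ).submatrix id Prod.swap := by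
  rw [swapReflection, Matrix.mul_sub, mul_submatrix_id, ← mul_kronecker_mul, ← mul_kronecker_mul,
    Matrix.mul_one, Matrix.one_mul, Matrix.one_mul]

theorem swapReflection_mul_self {X : Matrix ι κ R} {Y : Matrix κ ι R} (hYX : Y * X = 1)
    (hXY : (X * Y)ᵀ = X * Y) : swapReflection X Y * swapReflection X Y = 1 := by
  set P := 1 - X * Y
  set T := (Xᵀ ⊗ₖ Yᵀ).submatrix id Prod.swap
  have hPt : Pᵀ = P := by rw [transpose_sub, transpose_one, hXY]
  have hPX : P * X = 0 := by
    rw [Matrix.sub_mul, Matrix.one_mul, Matrix.mul_assoc, hYX, Matrix.mul_one, sub_self]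
  have hYP : Y * P = 0 := by
    rw [Matrix.mul_sub, Matrix.mul_one, ← Matrix.mul_assoc, hYX, Matrix.one_mul, sub_self]
  have hPP : (1 ⊗ₖ P) * (1 ⊗ₖ P) = (1 ⊗ₖ P : Matrix (κ × ι) (κ × ι) R) := by
    rw [← mul_kronecker_mul, Matrix.one_mul, Matrix.mul_sub P 1 (X * Y), Matrix.mul_one,
      ← Matrix.mul_assoc, hPX, Matrix.zero_mul, sub_zero]
  have hPT : (1 ⊗ₖ P) * T = 0 := by
    rw [mul_submatrix_id, ← mul_kronecker_mul, Matrix.one_mul, ← hPt, ← transpose_mul, hYP,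
      transpose_zero, kronecker_zero]
    rfl
  have hTP : T * (1 ⊗ₖ P) = 0 := by
    rw [submatrix_swap_kronecker_mul_kronecker, ← hPt, ← transpose_mul, hPX, transpose_zero,
      zero_kronecker]
    rfl
  have hTT : T * T = 1 ⊗ₖ (X * Y) := by
    rw [mul_submatrix_id, submatrix_swap_kronecker_mul_kronecker, submatrix_submatrix,
      Function.comp_id, Prod.swap_swap_eq, submatrix_id_id, ← transpose_mul, ← transpose_mul, hYX,
      hXY, transpose_one]
  rw [swapReflection, Matrix.sub_mul, Matrix.mul_sub, Matrix.mul_sub, hPP, hPT, hTP, hTT, sub_zero,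
    zero_sub, sub_neg_eq_add, ← kronecker_add, sub_add_cancel, one_kronecker_one]

end SwapReflection

theorem abs_det_reindex_kronecker_commutation [CommRing R] [LinearOrder R] [IsStrictOrderedRing R]
    [Fintype ι] [Fintype κ] [DecidableEq ι] [DecidableEq κ] {X : Matrix ι κ R} {Y : Matrix κ ι R}
    (hYX : Y * X = 1) (hXY : (X * Y)ᵀ = X * Y) {K : Matrix (κ × ι) (ι × κ) R}
    (hK : ∀ A : Matrix ι κ R, K *ᵥ (fun p => A p.1 p.2) = fun p => Aᵀ p.1 p.2) :
    |(reindex (Equiv.refl (κ × ι)) (Equiv.prodComm ι κ)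
        (-(Y ⊗ₖ Yᵀ) + ((Y * Yᵀ) ⊗ₖ (1 - X * Y)) * K)).det| = |(Y * Yᵀ).det| ^ Fintype.card ι := by
  have hYYX : Y * Yᵀ * Xᵀ = Y := by
    rw [Matrix.mul_assoc, ← transpose_mul, hXY, ← Matrix.mul_assoc, hYX, Matrix.one_mul]
  have hJ : reindex (Equiv.refl (κ × ι)) (Equiv.prodComm ι κ)
      (-(Y ⊗ₖ Yᵀ) + ((Y * Yᵀ) ⊗ₖ (1 - X * Y)) * K) = ((Y * Yᵀ) ⊗ₖ 1) * swapReflection X Y := by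
    rw [kronecker_one_mul_swapReflection, hYYX]
    calc _ = -reindex (Equiv.refl (κ × ι)) (Equiv.prodComm ι κ) (Y ⊗ₖ Yᵀ) +
          reindex (Equiv.refl (κ × ι)) (Equiv.prodComm ι κ) (((Y * Yᵀ) ⊗ₖ (1 - X * Y)) * K) := rfl
      _ = _ := by rw [reindex_prodComm_mul_eq_self hK, neg_add_eq_sub]; rfl
  rw [hJ, det_mul, det_kronecker, det_one, one_pow, mul_one, abs_mul, abs_pow,
    abs_det_eq_one_of_mul_self_eq_one (swapReflection_mul_self hYX hXY), mul_one]

end Matrix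

theorem jacobian_moorePenrose_full_column_rank (n m : ℕ)
    (X : Matrix (Fin n) (Fin m) ℝ) (hrank : X.rank = m)
    (Y : Matrix (Fin m) (Fin n) ℝ) (hY : Y = (Xᵀ * X)⁻¹ * Xᵀ)
    (K : Matrix (Fin m × Fin n) (Fin n × Fin m) ℝ)
    (hK : ∀ A : Matrix (Fin n) (Fin m) ℝ,
      K.mulVec (fun p => A p.1 p.2) = fun p => Aᵀ p.1 p.2) :
    |((Matrix.reindex (Equiv.refl (Fin m × Fin n)) (Equiv.prodComm (Fin n) (Fin m)))
        (-(Y ⊗ₖ Yᵀ) + ((Y * Yᵀ) ⊗ₖ (1 - X * Y)) * K)).det|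
      = (Xᵀ * X).det ^ (-(n : ℤ)) := by
  have hunit : IsUnit (Xᵀ * X).det := (isUnit_iff_isUnit_det _).mp <|
    isUnit_of_rank_eq_card (by rw [rank_transpose_mul_self, hrank, Fintype.card_fin])
  have hpos : 0 < (Xᵀ * X).det := by
    have hpsd : (Xᵀ * X).PosSemidef := by simpa using posSemidef_conjTranspose_mul_self X
    exact hpsd.det_nonneg.lt_of_ne' hunit.ne_zero
  have hinvT : ((Xᵀ * X)⁻¹)ᵀ = (Xᵀ * X)⁻¹ := by
    rw [transpose_nonsing_inv, transpose_mul, transpose_transpose]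
  have hYt : Yᵀ = X * (Xᵀ * X)⁻¹ := by rw [hY, transpose_mul, transpose_transpose, hinvT]
  have hYX : Y * X = 1 := by rw [hY, Matrix.mul_assoc, nonsing_inv_mul _ hunit]
  have hXY : (X * Y)ᵀ = X * Y := by rw [transpose_mul, hYt, hY, Matrix.mul_assoc]
  have hYYt : Y * Yᵀ = (Xᵀ * X)⁻¹ := by
    rw [hYt, hY, Matrix.mul_assoc, ← Matrix.mul_assoc Xᵀ, mul_nonsing_inv _ hunit, Matrix.mul_one]
  rw [abs_det_reindex_kronecker_commutation hYX hXY hK, hYYt, det_nonsing_inv,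
    Ring.inverse_eq_inv', abs_inv, abs_of_pos hpos, Fintype.card_fin, _root_.zpow_neg, zpow_natCast,
    inv_pow]
end
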